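/- Let f be a self-concordant function on R^n, g its gradient, f* its Fenchel conjugate with gradient g* and Hessian H*. Write θ(x) = g*(x) and local dual norms ‖v‖*_z = √⟨v, H*(z)v⟩ and ‖v‖_{θ} = √⟨v, H(θ)v⟩. For x, z ∈ int(dom f*), if ‖θ(x) − θ(z)‖_{θ(z)} < 1 then ‖x − z‖*_z ≤ ‖θ(x) − θ(z)‖_{θ(z)} / (1 − ‖θ(x) − θ(z)‖_{θ(z)}) and ‖x − z‖*_z / (1 + ‖x − z‖*_z) ≤ ‖θ(x) − θ(z)‖_{θ(z)}. -/

import Mathlib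

open scoped RealInnerProductSpace

/-- Local norm `‖v‖_θ = √⟨v, H(θ)v⟩` induced by a family of operators `H`. -/
noncomputable def lnormH {n : ℕ}
    (H : EuclideanSpace ℝ (Fin n) → (EuclideanSpace ℝ (Fin n) →ₗ[ℝ] EuclideanSpace ℝ (Fin n)))
    (θ v : EuclideanSpace ℝ (Fin n)) : ℝ :=
  Real.sqrt ⟪v, H θ v⟫

/-!
With `r = ‖θ₁ - θ₀‖_{θ₀}` and `u = H(θ₀)⁻¹ (x - z)`, the dual local norm `‖x - z‖*_z` equals
`s = ‖u‖_{θ₀}`, and `s² = ⟨u, g θ₁ - g θ₀⟩`. Along the segment `θ₀ + t (θ₁ - θ₀)` the derivative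
of `⟨u, g⟩` is bounded, via Cauchy–Schwarz in the local inner product and self-concordance, by
`s r / (1 - t r)²`, whose integral over `[0, 1]` is `s r / (1 - r)`. Hence `s ≤ r / (1 - r)`, which
rearranges to `s / (1 + s) ≤ r`.
-/

open Set

section LocalNorm

variable {n : ℕ}

local notation "𝔼" m:max => EuclideanSpace ℝ (Fin m)

variable {H : 𝔼 n → (𝔼 n →ₗ[ℝ] 𝔼 n)}

/-- The upper half of Renegar's self-concordance inequality. -/
def RenegarUpperBound (H : 𝔼 n → (𝔼 n →ₗ[ℝ] 𝔼 n)) : Prop :=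
  ∀ θ₀ θ₁ v, lnormH H θ₀ (θ₁ - θ₀) < 1 →
    lnormH H θ₁ v ≤ lnormH H θ₀ v / (1 - lnormH H θ₀ (θ₁ - θ₀))

lemma inner_apply_self_nonneg (hHpd : ∀ θ v, v ≠ 0 → 0 < ⟪v, H θ v⟫) (θ v : 𝔼 n) :
    0 ≤ ⟪v, H θ v⟫ := by
  rcases eq_or_ne v 0 with rfl | hv
  · simp
  · exact (hHpd θ v hv).le

lemma lnormH_sq (hHpd : ∀ θ v, v ≠ 0 → 0 < ⟪v, H θ v⟫) (θ v : 𝔼 n) :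
    lnormH H θ v ^ 2 = ⟪v, H θ v⟫ :=
  Real.sq_sqrt (inner_apply_self_nonneg hHpd θ v)

lemma lnormH_smul (t : ℝ) (θ v : 𝔼 n) : lnormH H θ (t • v) = |t| * lnormH H θ v := by
  rw [lnormH, lnormH, map_smul, real_inner_smul_left, inner_smul_right, ← mul_assoc, ← sq,
    Real.sqrt_mul (sq_nonneg t), Real.sqrt_sq_eq_abs]

lemma inner_apply_le_lnormH_mul_lnormH (hHsymm : ∀ θ v w, ⟪H θ v, w⟫ = ⟪v, H θ w⟫)
    (hHpd : ∀ θ v, v ≠ 0 → 0 < ⟪v, H θ v⟫) (θ u v : 𝔼 n) :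
    ⟪u, H θ v⟫ ≤ lnormH H θ u * lnormH H θ v := by
  let B : LinearMap.BilinForm ℝ (𝔼 n) := (innerₗ (𝔼 n)).compl₂ (H θ)
  have hcs : ⟪u, H θ v⟫ * ⟪v, H θ u⟫ ≤ ⟪u, H θ u⟫ * ⟪v, H θ v⟫ :=
    B.apply_mul_apply_le_of_forall_zero_le (inner_apply_self_nonneg hHpd θ) u v
  rw [show ⟪v, H θ u⟫ = ⟪u, H θ v⟫ by rw [real_inner_comm, hHsymm], ← sq] at hcs
  calc ⟪u, H θ v⟫ ≤ |⟪u, H θ v⟫| := le_abs_self _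
    _ ≤ Real.sqrt (⟪u, H θ u⟫ * ⟪v, H θ v⟫) := Real.abs_le_sqrt hcs
    _ = lnormH H θ u * lnormH H θ v := Real.sqrt_mul (inner_apply_self_nonneg hHpd θ u) _

lemma lnormH_dual_apply {Hstar : 𝔼 n → (𝔼 n →ₗ[ℝ] 𝔼 n)} {g : 𝔼 n → 𝔼 n}
    (hHstar : ∀ θ v, Hstar (g θ) (H θ v) = v) (θ u : 𝔼 n) :
    lnormH Hstar (g θ) (H θ u) = lnormH H θ u := by
  rw [lnormH, hHstar, real_inner_comm, lnormH]

lemma inner_apply_segment_le (hHsymm : ∀ θ v w, ⟪H θ v, w⟫ = ⟪v, H θ w⟫)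
    (hHpd : ∀ θ v, v ≠ 0 → 0 < ⟪v, H θ v⟫) (hsc : RenegarUpperBound H) {θ d : 𝔼 n}
    (hd : lnormH H θ d < 1) (u : 𝔼 n) {t : ℝ} (ht : t ∈ Icc 0 1) :
    ⟪u, H (θ + t • d) d⟫ ≤ lnormH H θ u * lnormH H θ d / (1 - t * lnormH H θ d) ^ 2 := by
  set r := lnormH H θ d
  have hstep : lnormH H θ (θ + t • d - θ) = t * r := by
    rw [add_sub_cancel_left, lnormH_smul, abs_of_nonneg ht.1]
  have htr : t * r < 1 := (mul_le_of_le_one_left (Real.sqrt_nonneg _) ht.2).trans_lt hd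
  have hu := hsc θ (θ + t • d) u (hstep ▸ htr)
  have hd' := hsc θ (θ + t • d) d (hstep ▸ htr)
  rw [hstep] at hu hd'
  calc ⟪u, H (θ + t • d) d⟫ ≤ lnormH H (θ + t • d) u * lnormH H (θ + t • d) d :=
        inner_apply_le_lnormH_mul_lnormH hHsymm hHpd _ u d
    _ ≤ lnormH H θ u / (1 - t * r) * (r / (1 - t * r)) :=
        mul_le_mul hu hd' (Real.sqrt_nonneg _) (div_nonneg (Real.sqrt_nonneg _) (by linarith))
    _ = lnormH H θ u * r / (1 - t * r) ^ 2 := by rw [div_mul_div_comm, sq]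

lemma inner_map_sub_le_of_renegarUpperBound {g : 𝔼 n → 𝔼 n}
    (hderiv : ∀ θ, HasFDerivAt g (LinearMap.toContinuousLinearMap (H θ)) θ)
    (hHsymm : ∀ θ v w, ⟪H θ v, w⟫ = ⟪v, H θ w⟫) (hHpd : ∀ θ v, v ≠ 0 → 0 < ⟪v, H θ v⟫)
    (hsc : RenegarUpperBound H) {θ₀ θ₁ : 𝔼 n} (hclose : lnormH H θ₀ (θ₁ - θ₀) < 1) (u : 𝔼 n) :
    ⟪u, g θ₁ - g θ₀⟫ ≤
      lnormH H θ₀ u * (lnormH H θ₀ (θ₁ - θ₀) / (1 - lnormH H θ₀ (θ₁ - θ₀))) := by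
  set d := θ₁ - θ₀
  set r := lnormH H θ₀ d
  set s := lnormH H θ₀ u
  have hpath (t : ℝ) :
      HasDerivAt (fun t : ℝ => ⟪u, g (θ₀ + t • d)⟫) ⟪u, H (θ₀ + t • d) d⟫ t := by
    have hline : HasDerivAt (fun t : ℝ => θ₀ + t • d) d t := by
      simpa using ((hasDerivAt_id t).smul_const d).const_add θ₀
    simpa using (hasDerivAt_const t u).inner ℝ ((hderiv _).comp_hasDerivAt t hline)
  have hmajorant (t : ℝ) (ht : t ∈ Icc (0 : ℝ) 1) :
      HasDerivAt (fun t : ℝ => s / (1 - t * r)) (s * r / (1 - t * r) ^ 2) t := by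
    have hpos : 1 - t * r ≠ 0 :=
      (sub_pos.2 ((mul_le_of_le_one_left (Real.sqrt_nonneg _) ht.2).trans_lt hclose)).ne'
    have hden : HasDerivAt (fun t : ℝ => 1 - t * r) (-r) t := by
      simpa using ((hasDerivAt_id t).mul_const r).const_sub 1
    exact ((hasDerivAt_const t s).div hden hpos).congr_deriv (by ring)
  have key := image_le_of_deriv_right_le_deriv_boundary
    (f := fun t : ℝ => ⟪u, g (θ₀ + t • d)⟫) (B := fun t => ⟪u, g θ₀⟫ - s + s / (1 - t * r))
    (fun t _ => (hpath t).continuousAt.continuousWithinAt)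
    (fun t _ => (hpath t).hasDerivWithinAt) (by simp)
    (fun t ht => ((hmajorant t ht).const_add _).continuousAt.continuousWithinAt)
    (fun t ht => ((hmajorant t (Ico_subset_Icc_self ht)).const_add _).hasDerivWithinAt)
    (fun t ht => inner_apply_segment_le hHsymm hHpd hsc hclose u (Ico_subset_Icc_self ht))
    (right_mem_Icc.2 zero_le_one)
  have hr : 1 - r ≠ 0 := (sub_pos.2 hclose).ne'
  simp only [one_smul, add_sub_cancel, one_mul, d] at key
  rw [inner_sub_right]
  calc _ ≤ s / (1 - r) - s := by linarith
    _ = s * (r / (1 - r)) := by field_simp; ring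

end LocalNorm

theorem stmt12 (n : ℕ)
    -- `g` is the gradient map of a self-concordant `f`, `H` its Hessian,
    -- `θmap = g*` the gradient of the conjugate `f*`, `Hstar = H*` its Hessian.
    (g θmap : EuclideanSpace ℝ (Fin n) → EuclideanSpace ℝ (Fin n))
    (H Hstar : EuclideanSpace ℝ (Fin n) → (EuclideanSpace ℝ (Fin n) →ₗ[ℝ] EuclideanSpace ℝ (Fin n)))
    (hHsymm : ∀ θ v w, ⟪H θ v, w⟫ = ⟪v, H θ w⟫)
    (hHpd : ∀ θ v, v ≠ 0 → 0 < ⟪v, H θ v⟫)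
    -- `H` is the derivative of the gradient map `g`:
    (hderiv : ∀ θ, HasFDerivAt g (LinearMap.toContinuousLinearMap (H θ)) θ)
    -- `H*(g(θ)) = H(θ)⁻¹`:
    (hHstar : ∀ θ v, Hstar (g θ) (H θ v) = v)
    -- self-concordance of `f` in Renegar's sense:
    (hsc : ∀ θ₀ θ₁ v, lnormH H θ₀ (θ₁ - θ₀) < 1 →
      (1 - lnormH H θ₀ (θ₁ - θ₀)) * lnormH H θ₀ v ≤ lnormH H θ₁ v ∧
        lnormH H θ₁ v ≤ lnormH H θ₀ v / (1 - lnormH H θ₀ (θ₁ - θ₀)))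
    (x z : EuclideanSpace ℝ (Fin n))
    -- `x, z ∈ int (dom f*)`, i.e. `g(θ(x)) = x` and `g(θ(z)) = z`:
    (hx : g (θmap x) = x) (hz : g (θmap z) = z)
    (hclose : lnormH H (θmap z) (θmap x - θmap z) < 1) :
    lnormH Hstar z (x - z) ≤
        lnormH H (θmap z) (θmap x - θmap z) / (1 - lnormH H (θmap z) (θmap x - θmap z)) ∧
      lnormH Hstar z (x - z) / (1 + lnormH Hstar z (x - z)) ≤
        lnormH H (θmap z) (θmap x - θmap z) := by
  set r := lnormH H (θmap z) (θmap x - θmap z)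
  have hr : 0 < 1 - r := sub_pos.2 hclose
  obtain ⟨u, hu⟩ : ∃ u, H (θmap z) u = x - z :=
    LinearMap.injective_iff_surjective.mp (Function.LeftInverse.injective (hHstar (θmap z))) _
  have hdual : lnormH Hstar z (x - z) = lnormH H (θmap z) u := by
    simpa only [hz, hu] using lnormH_dual_apply hHstar (θmap z) u
  have hsq : lnormH H (θmap z) u ^ 2 ≤ lnormH H (θmap z) u * (r / (1 - r)) :=
    calc _ = ⟪u, g (θmap x) - g (θmap z)⟫ := by rw [lnormH_sq hHpd, hu, hx, hz]
      _ ≤ _ := inner_map_sub_le_of_renegarUpperBound hderiv hHsymm hHpd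
        (fun θ₀ θ₁ v h => (hsc θ₀ θ₁ v h).2) hclose u
  have hfirst : lnormH H (θmap z) u ≤ r / (1 - r) := by
    have : 0 ≤ r / (1 - r) := div_nonneg (Real.sqrt_nonneg _) hr.le
    nlinarith
  refine ⟨hdual ▸ hfirst, ?_⟩
  have hs : 0 ≤ lnormH H (θmap z) u := Real.sqrt_nonneg _
  rw [hdual, div_le_iff₀ (by linarith)]
  rw [le_div_iff₀ hr] at hfirst
  linarith
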